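/- arXiv:math-ph/0410011 — 2 statements merged into one kernel-verified Lean document; each statement's English description precedes it below -/
import Mathlib

section
/- Let β > 0, let φ ∈ ℝ be a phase, and let f : (0,∞) × S² → ℂ be measurable with ∫_{(0,∞)×S²} (1 + 2/(e^{βu} − 1)) |f(u,σ)|² u² du dσ < ∞. Then the function τ_β f belongs to L²(ℝ × S², du ⊗ dσ) and its squared L²-norm satisfies ‖τ_β f‖²_{L²(ℝ×S²)} = ∫_{(0,∞)×S²} (1 + 2/(e^{βu} − 1)) |f(u,σ)|² u² du dσ; that is, the Araki–Woods gluing map τ_β reproduces the black-body (Planck) weight 1 + 2/(e^{β|k|} − 1) of the thermal expectation functional. -/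
open MeasureTheory

/-- The unit sphere `S² ⊆ ℝ³`. -/
abbrev unitSphere2 : Set (EuclideanSpace ℝ (Fin 3)) := Metric.sphere 0 1

/-- The surface measure `dσ` on the unit sphere `S² ⊆ ℝ³`. -/
noncomputable def sphereMeasure : Measure unitSphere2 :=
  (volume : Measure (EuclideanSpace ℝ (Fin 3))).toSphere

/-- The Araki–Woods gluing map `τ_β` (with phase `φ`): for `f` the polar-coordinate
representation of a one-particle wave function,
`(τ_β f)(u,σ) = √(u/(1 − e^{−βu})) √u f(u,σ)` for `u > 0`, and
`(τ_β f)(u,σ) = √(u/(1 − e^{−βu})) √(−u) e^{iφ} conj(f(−u,σ))` for `u < 0`. -/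
noncomputable def tauBeta {Ω : Type*} (β φ : ℝ) (f : ℝ × Ω → ℂ) : ℝ × Ω → ℂ := fun q =>
  if 0 < q.1 then
    ((Real.sqrt (q.1 / (1 - Real.exp (-(β * q.1)))) * Real.sqrt q.1 : ℝ) : ℂ) * f q
  else if q.1 < 0 then
    ((Real.sqrt (q.1 / (1 - Real.exp (-(β * q.1)))) * Real.sqrt (-q.1) : ℝ) : ℂ) *
      Complex.exp (Complex.I * (φ : ℂ)) * (starRingEnd ℂ) (f (-q.1, q.2))
  else 0

/-! For `u > 0` one has `‖τ_β f (u,σ)‖² = u² ‖f (u,σ)‖² / (1 - e^{-βu})` and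
`‖τ_β f (-u,σ)‖² = u² ‖f (u,σ)‖² / (e^{βu} - 1)`, and
`1 / (1 - e^{-x}) + 1 / (e^x - 1) = 1 + 2 / (e^x - 1)`. Folding the negative half-line onto the
positive one by the measure-preserving reflection `u ↦ -u` therefore turns `‖τ_β f‖²` into the
Planck-weighted integral; the two nonnegative halves are dominated by their integrable sum, which
gives square integrability. -/

instance : IsFiniteMeasure sphereMeasure := by
  unfold sphereMeasure; infer_instance

section Reflection

open Set

variable {Ω : Type*} [MeasurableSpace Ω] {ν : Measure Ω} [SFinite ν]
  {E : Type*} [NormedAddCommGroup E]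

lemma measurePreserving_neg_prod_restrict_Ioi :
    MeasurePreserving ((MeasurableEquiv.neg ℝ).prodCongr (MeasurableEquiv.refl Ω))
      (((volume : Measure ℝ).prod ν).restrict (Ioi 0 ×ˢ univ))
      (((volume : Measure ℝ).prod ν).restrict (Iio 0 ×ˢ univ)) := by
  have h := ((Measure.measurePreserving_neg (volume : Measure ℝ)).prod
    (MeasurePreserving.id ν)).restrict_preimage
      ((measurableSet_Iio (a := (0 : ℝ))).prod MeasurableSet.univ)
  convert h using 2
  · rfl
  · ext q
    simp

lemma integrableOn_Iio_prod_iff {g : ℝ × Ω → E} :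
    IntegrableOn g (Iio 0 ×ˢ univ) ((volume : Measure ℝ).prod ν) ↔
      IntegrableOn (fun q => g (-q.1, q.2)) (Ioi 0 ×ˢ univ) ((volume : Measure ℝ).prod ν) :=
  (measurePreserving_neg_prod_restrict_Ioi.integrable_comp_emb
    (MeasurableEquiv.measurableEmbedding _)).symm

lemma setIntegral_Iio_prod_eq [NormedSpace ℝ E] (g : ℝ × Ω → E) :
    ∫ q in Iio 0 ×ˢ univ, g q ∂((volume : Measure ℝ).prod ν) =
      ∫ q in Ioi 0 ×ˢ univ, g (-q.1, q.2) ∂((volume : Measure ℝ).prod ν) :=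
  (measurePreserving_neg_prod_restrict_Ioi.integral_comp
    (MeasurableEquiv.measurableEmbedding _) g).symm

lemma restrict_Ioi_prod_union_Iio_prod :
    ((volume : Measure ℝ).prod ν).restrict (Ioi 0 ×ˢ univ ∪ Iio 0 ×ˢ univ) =
      (volume : Measure ℝ).prod ν := by
  refine Measure.restrict_eq_self_of_ae_mem ?_
  have hzero : (volume : Measure ℝ).prod ν ({0} ×ˢ univ) = 0 := by simp [Measure.prod_prod]
  filter_upwards [measure_eq_zero_iff_ae_notMem.1 hzero] with q hq
  simp only [mem_prod, mem_singleton_iff, mem_univ, and_true] at hq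
  simpa [or_comm] using lt_or_gt_of_ne hq

lemma integrable_of_integrableOn_Ioi_prod {g : ℝ × Ω → E}
    (hpos : IntegrableOn g (Ioi 0 ×ˢ univ) ((volume : Measure ℝ).prod ν))
    (hneg : IntegrableOn (fun q => g (-q.1, q.2)) (Ioi 0 ×ˢ univ) ((volume : Measure ℝ).prod ν)) :
    Integrable g ((volume : Measure ℝ).prod ν) := by
  rw [← restrict_Ioi_prod_union_Iio_prod]
  exact hpos.union (integrableOn_Iio_prod_iff.2 hneg)

lemma integral_eq_setIntegral_Ioi_prod_add [NormedSpace ℝ E] {g : ℝ × Ω → E}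
    (hpos : IntegrableOn g (Ioi 0 ×ˢ univ) ((volume : Measure ℝ).prod ν))
    (hneg : IntegrableOn (fun q => g (-q.1, q.2)) (Ioi 0 ×ˢ univ) ((volume : Measure ℝ).prod ν)) :
    ∫ q, g q ∂((volume : Measure ℝ).prod ν) =
      ∫ q in Ioi 0 ×ˢ univ, (g q + g (-q.1, q.2)) ∂((volume : Measure ℝ).prod ν) := by
  have hdisj : Disjoint (Ioi (0 : ℝ) ×ˢ (univ : Set Ω)) (Iio 0 ×ˢ univ) :=
    Ioi_disjoint_Iio_same.set_prod_left _ _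
  rw [integral_add hpos hneg, ← setIntegral_Iio_prod_eq, ← setIntegral_union hdisj
    (measurableSet_Iio.prod MeasurableSet.univ) hpos (integrableOn_Iio_prod_iff.2 hneg),
    restrict_Ioi_prod_union_Iio_prod]

end Reflection

section GluingMap

variable {Ω : Type*}

lemma measurable_tauBeta [MeasurableSpace Ω] (β φ : ℝ) {f : ℝ × Ω → ℂ} (hf : Measurable f) :
    Measurable (tauBeta β φ f) := by
  exact Measurable.ite (measurableSet_lt measurable_const measurable_fst) (by fun_prop)
    (Measurable.ite (measurableSet_lt measurable_fst measurable_const) (by fun_prop)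
      measurable_const)

lemma div_one_sub_exp_neg_mul_nonneg {β : ℝ} (hβ : 0 ≤ β) (u : ℝ) :
    0 ≤ u / (1 - Real.exp (-(β * u))) := by
  rcases le_total 0 u with hu | hu
  · exact div_nonneg hu (sub_nonneg.2 (Real.exp_le_one_iff.2 (by nlinarith)))
  · exact div_nonneg_of_nonpos hu (sub_nonpos.2 (Real.one_le_exp_iff.2 (by nlinarith)))

lemma norm_sq_tauBeta_of_pos {β : ℝ} (hβ : 0 ≤ β) (φ : ℝ) (f : ℝ × Ω → ℂ) {u : ℝ} (hu : 0 < u)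
    (σ : Ω) :
    ‖tauBeta β φ f (u, σ)‖ ^ 2 = u ^ 2 / (1 - Real.exp (-(β * u))) * ‖f (u, σ)‖ ^ 2 := by
  simp only [tauBeta, if_pos hu, norm_mul, Complex.norm_real, Real.norm_eq_abs, mul_pow, sq_abs,
    Real.sq_sqrt (div_one_sub_exp_neg_mul_nonneg hβ u), Real.sq_sqrt hu.le]
  ring

lemma norm_sq_tauBeta_neg {β : ℝ} (hβ : 0 ≤ β) (φ : ℝ) (f : ℝ × Ω → ℂ) {u : ℝ} (hu : 0 < u)
    (σ : Ω) :
    ‖tauBeta β φ f (-u, σ)‖ ^ 2 = u ^ 2 / (Real.exp (β * u) - 1) * ‖f (u, σ)‖ ^ 2 := by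
  have hexp : ‖Complex.exp (Complex.I * φ)‖ = 1 := by
    rw [mul_comm]; exact Complex.norm_exp_ofReal_mul_I φ
  simp only [tauBeta, if_neg (neg_nonpos.2 hu.le).not_gt, if_pos (neg_neg_of_pos hu), neg_neg,
    norm_mul, Complex.norm_real, Real.norm_eq_abs, hexp, RCLike.norm_conj, mul_pow, sq_abs,
    Real.sq_sqrt (div_one_sub_exp_neg_mul_nonneg hβ (-u)), Real.sq_sqrt hu.le]
  rw [mul_neg, neg_neg, ← neg_sub, div_neg, neg_div]
  ring

lemma one_div_one_sub_exp_neg_add_one_div_exp_sub_one {x : ℝ} (hx : x ≠ 0) :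
    1 / (1 - Real.exp (-x)) + 1 / (Real.exp x - 1) = 1 + 2 / (Real.exp x - 1) := by
  have hexp : Real.exp x - 1 ≠ 0 := sub_ne_zero.2 (mt (Real.exp_eq_one_iff x).1 hx)
  rw [Real.exp_neg]
  field_simp
  ring

lemma norm_sq_tauBeta_add_norm_sq_tauBeta_neg {β : ℝ} (hβ : 0 < β) (φ : ℝ) (f : ℝ × Ω → ℂ)
    {u : ℝ} (hu : 0 < u) (σ : Ω) :
    ‖tauBeta β φ f (u, σ)‖ ^ 2 + ‖tauBeta β φ f (-u, σ)‖ ^ 2 =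
      (1 + 2 / (Real.exp (β * u) - 1)) * ‖f (u, σ)‖ ^ 2 * u ^ 2 := by
  rw [norm_sq_tauBeta_of_pos hβ.le φ f hu, norm_sq_tauBeta_neg hβ.le φ f hu,
    ← one_div_one_sub_exp_neg_add_one_div_exp_sub_one (mul_pos hβ hu).ne']
  ring

end GluingMap

/-- Let `β > 0`, `φ ∈ ℝ`, and let `f : (0,∞) × S² → ℂ` be measurable with
`∫ (1 + 2/(e^{βu} − 1)) |f(u,σ)|² u² du dσ < ∞`.  Then `τ_β f ∈ L²(ℝ × S², du ⊗ dσ)` and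
`‖τ_β f‖²_{L²} = ∫_{(0,∞)×S²} (1 + 2/(e^{βu} − 1)) |f(u,σ)|² u² du dσ`: the Araki–Woods
gluing map reproduces the black-body (Planck) weight. -/
theorem tauBeta_memLp_and_norm_sq (β φ : ℝ) (hβ : 0 < β)
    (f : ℝ × unitSphere2 → ℂ) (hf : Measurable f)
    (hint : IntegrableOn
      (fun q : ℝ × unitSphere2 =>
        (1 + 2 / (Real.exp (β * q.1) - 1)) * ‖f q‖ ^ 2 * q.1 ^ 2)
      (Set.Ioi (0 : ℝ) ×ˢ Set.univ) ((volume : Measure ℝ).prod sphereMeasure)) :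
    MemLp (tauBeta β φ f) 2 ((volume : Measure ℝ).prod sphereMeasure) ∧
      (∫ q, ‖tauBeta β φ f q‖ ^ 2 ∂((volume : Measure ℝ).prod sphereMeasure)) =
        ∫ q in Set.Ioi (0 : ℝ) ×ˢ (Set.univ : Set unitSphere2),
          (1 + 2 / (Real.exp (β * q.1) - 1)) * ‖f q‖ ^ 2 * q.1 ^ 2
          ∂((volume : Measure ℝ).prod sphereMeasure) := by
  set S := Set.Ioi (0 : ℝ) ×ˢ (Set.univ : Set unitSphere2)
  set g : ℝ × unitSphere2 → ℝ := fun q => ‖tauBeta β φ f q‖ ^ 2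
  have hτ : Measurable (tauBeta β φ f) := measurable_tauBeta β φ hf
  have hsum : Set.EqOn (fun q => g q + g (-q.1, q.2))
      (fun q => (1 + 2 / (Real.exp (β * q.1) - 1)) * ‖f q‖ ^ 2 * q.1 ^ 2) S :=
    fun q hq => norm_sq_tauBeta_add_norm_sq_tauBeta_neg hβ φ f hq.1 q.2
  have hS : MeasurableSet S := measurableSet_Ioi.prod MeasurableSet.univ
  obtain ⟨hpos, hneg⟩ := (integrable_add_iff_of_nonneg (hτ.norm.pow_const 2).aestronglyMeasurable
    (ae_of_all _ fun q => by positivity) (ae_of_all _ fun q => by positivity)).1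
    (hint.congr_fun hsum.symm hS)
  refine ⟨(memLp_two_iff_integrable_sq_norm hτ.aestronglyMeasurable).2
    (integrable_of_integrableOn_Ioi_prod hpos hneg), ?_⟩
  rw [integral_eq_setIntegral_Ioi_prod_add hpos hneg]
  exact setIntegral_congr_fun hS hsum
end

section
/- Let D₁, …, D_m be pairwise disjoint finite sets with |D_j| = k_j and ∑_{j=1}^m k_j = 2N for some N ∈ ℕ, and let D = D₁ ∪ ⋯ ∪ D_m; for x ∈ D write j(x) for the unique index with x ∈ D_{j(x)}. Let c : {1,…,m} × {1,…,m} → [0,∞) be symmetric and set Γ := max_{1≤j≤m} ∑_{j'=1}^{m} c(j, j'). For a perfect matching 𝓜 of D (a partition of D into N two-element subsets) define its weight w(𝓜) := ∏_{{x,y}∈𝓜} c(j(x), j(y)). Then ∑_{𝓜 perfect matching of D} w(𝓜) ≤ ( ∏_{j=1}^{m} k_j^{k_j/2} ) · Γ^{N}. -/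
open Finset

namespace WickGraphAux

variable {D : Type*}

open Classical in
/-- `M` is a perfect matching of the finset `S`. -/
def Good (S : Finset D) (M : Finset (Sym2 D)) : Prop :=
  (∀ e ∈ M, ¬ e.IsDiag) ∧ (∀ e ∈ M, ∀ x ∈ e, x ∈ S) ∧ (∀ x ∈ S, ∃! e, e ∈ M ∧ x ∈ e)

lemma good_empty {M : Finset (Sym2 D)} (h : Good (∅ : Finset D) M) : M = ∅ := by
  classical
  ext e
  simp only [Finset.notMem_empty, iff_false]
  intro he
  induction e using Sym2.ind with
  | _ a b => exact absurd (h.2.1 _ he a (by simp)) (by simp)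

lemma good_empty' : Good (∅ : Finset D) (∅ : Finset (Sym2 D)) := by
  refine ⟨by simp, by simp, by simp⟩

lemma good_erase [DecidableEq D] {S : Finset D} {M : Finset (Sym2 D)} (h : Good S M)
    {a b : D} (he : s(a, b) ∈ M) :
    Good ((S.erase a).erase b) (M.erase s(a, b)) := by
  obtain ⟨h1, h2, h3⟩ := h
  have haS : a ∈ S := h2 _ he a (by simp)
  have hbS : b ∈ S := h2 _ he b (by simp)
  refine ⟨fun e heM => h1 e (Finset.mem_of_mem_erase heM), ?_, ?_⟩
  · intro e heM x hxe
    have heM' : e ∈ M := Finset.mem_of_mem_erase heM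
    have hne : e ≠ s(a, b) := Finset.ne_of_mem_erase heM
    have hxS : x ∈ S := h2 _ heM' x hxe
    have hxa : x ≠ a := by
      rintro rfl
      exact hne ((h3 x hxS).unique ⟨heM', hxe⟩ ⟨he, by simp⟩)
    have hxb : x ≠ b := by
      rintro rfl
      exact hne ((h3 x hxS).unique ⟨heM', hxe⟩ ⟨he, by simp⟩)
    exact Finset.mem_erase.2 ⟨hxb, Finset.mem_erase.2 ⟨hxa, hxS⟩⟩
  · intro x hx
    rw [Finset.mem_erase, Finset.mem_erase] at hx
    obtain ⟨hxb, hxa, hxS⟩ := hx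
    obtain ⟨e, ⟨heM, hxe⟩, hu⟩ := h3 x hxS
    have hne : e ≠ s(a, b) := by
      rintro rfl
      rcases Sym2.mem_iff.1 hxe with rfl | rfl
      exacts [hxa rfl, hxb rfl]
    refine ⟨e, ⟨Finset.mem_erase.2 ⟨hne, heM⟩, hxe⟩, ?_⟩
    rintro e' ⟨he'M, hxe'⟩
    exact hu e' ⟨Finset.mem_of_mem_erase he'M, hxe'⟩

lemma not_mem_good [DecidableEq D] {S : Finset D} {M : Finset (Sym2 D)} {a b : D}
    (h : Good ((S.erase a).erase b) M) : s(a, b) ∉ M := by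
  intro hmem
  have := h.2.1 _ hmem a (by simp)
  rw [Finset.mem_erase, Finset.mem_erase] at this
  exact this.2.1 rfl

lemma good_insert [DecidableEq D] {S : Finset D} {M : Finset (Sym2 D)} {a b : D}
    (ha : a ∈ S) (hb : b ∈ S) (hab : a ≠ b)
    (h : Good ((S.erase a).erase b) M) : Good S (insert s(a, b) M) := by
  obtain ⟨h1, h2, h3⟩ := h
  have hsub : ∀ e ∈ M, ∀ x ∈ e, x ≠ a ∧ x ≠ b ∧ x ∈ S := by
    intro e heM x hxe
    have := h2 e heM x hxe
    rw [Finset.mem_erase, Finset.mem_erase] at this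
    exact ⟨this.2.1, this.1, this.2.2⟩
  refine ⟨?_, ?_, ?_⟩
  · intro e heM
    rcases Finset.mem_insert.1 heM with rfl | heM
    · simpa [Sym2.mk_isDiag_iff] using hab
    · exact h1 e heM
  · intro e heM x hxe
    rcases Finset.mem_insert.1 heM with rfl | heM
    · rcases Sym2.mem_iff.1 hxe with rfl | rfl
      exacts [ha, hb]
    · exact (hsub e heM x hxe).2.2
  · intro x hxS
    by_cases hxa : x = a
    · subst hxa
      refine ⟨s(x, b), ⟨Finset.mem_insert_self _ _, by simp⟩, ?_⟩
      rintro e' ⟨he'M, hxe'⟩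
      rcases Finset.mem_insert.1 he'M with rfl | he'M
      · rfl
      · exact absurd rfl (hsub e' he'M x hxe').1
    by_cases hxb : x = b
    · subst hxb
      refine ⟨s(a, x), ⟨Finset.mem_insert_self _ _, by simp⟩, ?_⟩
      rintro e' ⟨he'M, hxe'⟩
      rcases Finset.mem_insert.1 he'M with rfl | he'M
      · rfl
      · exact absurd rfl (hsub e' he'M x hxe').2.1
    · have hx' : x ∈ (S.erase a).erase b :=
        Finset.mem_erase.2 ⟨hxb, Finset.mem_erase.2 ⟨hxa, hxS⟩⟩
      obtain ⟨e, ⟨heM, hxe⟩, hu⟩ := h3 x hx'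
      refine ⟨e, ⟨Finset.mem_insert_of_mem heM, hxe⟩, ?_⟩
      rintro e' ⟨he'M, hxe'⟩
      rcases Finset.mem_insert.1 he'M with rfl | he'M
      · rcases Sym2.mem_iff.1 hxe' with rfl | rfl
        exacts [absurd rfl hxa, absurd rfl hxb]
      · exact hu e' ⟨he'M, hxe'⟩

variable {D : Type*}

open Classical in
lemma sum_good_split [Fintype D] (f : Sym2 D → ℝ) {S : Finset D} {x : D} (hx : x ∈ S) :
    ∑ M ∈ univ.filter (Good S), ∏ e ∈ M, f e =
      ∑ y ∈ S.erase x, f s(x, y) *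
        ∑ M ∈ univ.filter (Good ((S.erase x).erase y)), ∏ e ∈ M, f e := by
  classical
  have key : ∀ M ∈ univ.filter (Good S),
      (∏ e ∈ M, f e) = ∑ y ∈ S.erase x, if s(x, y) ∈ M then ∏ e ∈ M, f e else 0 := by
    intro M hM
    simp only [Finset.mem_filter, Finset.mem_univ, true_and] at hM
    obtain ⟨h1, h2, h3⟩ := hM
    obtain ⟨e, ⟨heM, hxe⟩, hu⟩ := h3 x hx
    have hspec : s(x, Sym2.Mem.other' hxe) = e := Sym2.other_spec' hxe
    set y0 := Sym2.Mem.other' hxe with hy0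
    have hy0x : y0 ≠ x := by
      intro hcontra
      apply h1 e heM
      rw [← hspec, hcontra]
      exact Sym2.mk_isDiag_iff.2 rfl
    have hy0S : y0 ∈ S := h2 e heM y0 (by rw [← hspec]; simp)
    rw [Finset.sum_eq_single_of_mem y0 (Finset.mem_erase.2 ⟨hy0x, hy0S⟩)]
    · rw [if_pos (hspec ▸ heM)]
    · intro y hy hne
      rw [if_neg]
      intro hmem
      apply hne
      have h5 : s(x, y) = e := hu _ ⟨hmem, by simp⟩
      rw [← hspec] at h5
      exact Sym2.congr_right.1 h5
  rw [Finset.sum_congr rfl key, Finset.sum_comm]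
  refine Finset.sum_congr rfl fun y hy => ?_
  have hyx : y ≠ x := (Finset.mem_erase.1 hy).1
  have hyS : y ∈ S := (Finset.mem_erase.1 hy).2
  rw [← Finset.sum_filter, Finset.mul_sum]
  refine Finset.sum_nbij' (fun M => M.erase s(x, y)) (fun M' => insert s(x, y) M')
    ?_ ?_ ?_ ?_ ?_
  · intro M hM
    simp only [Finset.mem_filter, Finset.mem_univ, true_and] at hM ⊢
    exact good_erase hM.1 hM.2
  · intro M' hM'
    simp only [Finset.mem_filter, Finset.mem_univ, true_and] at hM' ⊢
    exact ⟨good_insert hx hyS (Ne.symm hyx) hM', Finset.mem_insert_self _ _⟩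
  · intro M hM
    simp only [Finset.mem_filter] at hM
    exact Finset.insert_erase hM.2
  · intro M' hM'
    simp only [Finset.mem_filter, Finset.mem_univ, true_and] at hM'
    exact Finset.erase_insert (not_mem_good hM')
  · intro M hM
    simp only [Finset.mem_filter] at hM
    exact (Finset.mul_prod_erase M f hM.2).symm
variable {D : Type*} {m : ℕ}

noncomputable def nn (j : D → Fin m) (S : Finset D) (i : Fin m) : ℝ :=
  ((S.filter fun z => j z = i).card : ℝ)

noncomputable def prodn (j : D → Fin m) (S : Finset D) : ℝ :=
  ∏ i, nn j S i ^ (nn j S i / 2)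

lemma nn_nonneg (j : D → Fin m) (S : Finset D) (i : Fin m) : 0 ≤ nn j S i :=
  Nat.cast_nonneg _

lemma prodn_nonneg (j : D → Fin m) (S : Finset D) : 0 ≤ prodn j S :=
  Finset.prod_nonneg fun i _ => Real.rpow_nonneg (nn_nonneg j S i) _

lemma nn_one_le (j : D → Fin m) {S : Finset D} {x : D} (hx : x ∈ S) :
    1 ≤ nn j S (j x) := by
  have : 0 < (S.filter fun z => j z = j x).card :=
    Finset.card_pos.2 ⟨x, Finset.mem_filter.2 ⟨hx, rfl⟩⟩
  unfold nn
  exact_mod_cast this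

lemma nn_erase_self [DecidableEq D] (j : D → Fin m) {S : Finset D} {x : D} (hx : x ∈ S) :
    nn j (S.erase x) (j x) = nn j S (j x) - 1 := by
  unfold nn
  have hmem : x ∈ S.filter fun z => j z = j x := Finset.mem_filter.2 ⟨hx, rfl⟩
  rw [Finset.filter_erase, Finset.card_erase_of_mem hmem]
  have : 0 < (S.filter fun z => j z = j x).card :=
    Finset.card_pos.2 ⟨x, Finset.mem_filter.2 ⟨hx, rfl⟩⟩
  push_cast [Nat.cast_sub this]
  ring

lemma nn_erase_ne [DecidableEq D] (j : D → Fin m) {S : Finset D} {x : D} {i : Fin m}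
    (hi : i ≠ j x) : nn j (S.erase x) i = nn j S i := by
  unfold nn
  rw [Finset.filter_erase, Finset.erase_eq_of_notMem]
  intro hmem
  exact hi ((Finset.mem_filter.1 hmem).2).symm

lemma nn_erase_le [DecidableEq D] (j : D → Fin m) (S : Finset D) (x : D) (i : Fin m) :
    nn j (S.erase x) i ≤ nn j S i := by
  unfold nn
  exact_mod_cast Finset.card_le_card (Finset.filter_subset_filter _ (Finset.erase_subset _ _))

lemma prodn_erase [DecidableEq D] (j : D → Fin m) {S : Finset D} {x : D} (hx : x ∈ S) :
    prodn j (S.erase x) ≤ prodn j S * nn j S (j x) ^ (-(1 / 2) : ℝ) := by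
  have h1 : (1 : ℝ) ≤ nn j S (j x) := nn_one_le j hx
  have h0 : (0 : ℝ) < nn j S (j x) := lt_of_lt_of_le one_pos h1
  unfold prodn
  rw [← Finset.mul_prod_erase univ _ (Finset.mem_univ (j x)),
      ← Finset.mul_prod_erase univ (fun i => nn j S i ^ (nn j S i / 2)) (Finset.mem_univ (j x)),
      mul_right_comm]
  have hP : ∏ i ∈ univ.erase (j x), nn j (S.erase x) i ^ (nn j (S.erase x) i / 2)
      = ∏ i ∈ univ.erase (j x), nn j S i ^ (nn j S i / 2) := by
    refine Finset.prod_congr rfl fun i hi => ?_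
    rw [nn_erase_ne j (Finset.mem_erase.1 hi).1]
  rw [hP]
  refine mul_le_mul_of_nonneg_right ?_
    (Finset.prod_nonneg fun i _ => Real.rpow_nonneg (nn_nonneg j S i) _)
  rw [nn_erase_self j hx]
  calc (nn j S (j x) - 1) ^ ((nn j S (j x) - 1) / 2)
      ≤ nn j S (j x) ^ ((nn j S (j x) - 1) / 2) :=
        Real.rpow_le_rpow (by linarith) (by linarith) (by linarith)
    _ = nn j S (j x) ^ (nn j S (j x) / 2) * nn j S (j x) ^ (-(1 / 2) : ℝ) := by
        rw [← Real.rpow_add h0]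
        ring_nf

open Classical in
lemma main_bound [Fintype D] (j : D → Fin m) (c : Fin m → Fin m → ℝ)
    (hc0 : ∀ a b, 0 ≤ c a b) (hcs : ∀ a b, c a b = c b a) (Γ : ℝ)
    (hΓ : ∀ a, ∑ b, c a b ≤ Γ) (n : ℕ) :
    ∀ S : Finset D, S.card = 2 * n →
      ∑ M ∈ univ.filter (Good S),
          ∏ e ∈ M, Sym2.lift ⟨fun a b => c (j a) (j b), fun a b => hcs (j a) (j b)⟩ e
        ≤ prodn j S * Γ ^ n := by
  classical
  induction n with
  | zero =>
    intro S hS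
    have hSe : S = ∅ := Finset.card_eq_zero.1 (by omega)
    subst hSe
    have hset : univ.filter (Good (∅ : Finset D)) = {(∅ : Finset (Sym2 D))} := by
      ext M
      simp only [Finset.mem_filter, Finset.mem_univ, true_and, Finset.mem_singleton]
      exact ⟨good_empty, by rintro rfl; exact good_empty'⟩
    rw [hset, Finset.sum_singleton, Finset.prod_empty]
    simp [prodn, nn]
  | succ n ih =>
    intro S hS
    set f : Sym2 D → ℝ :=
      Sym2.lift ⟨fun a b => c (j a) (j b), fun a b => hcs (j a) (j b)⟩ with hf
    have hS0 : S.Nonempty := Finset.card_pos.1 (by omega)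
    obtain ⟨x0, hx0⟩ := hS0
    have hΓ0 : 0 ≤ Γ := le_trans (Finset.sum_nonneg fun b _ => hc0 (j x0) b) (hΓ (j x0))
    obtain ⟨istar, -, hmax⟩ := Finset.exists_max_image univ
      (fun i => (S.filter fun z => j z = i).card) ⟨j x0, Finset.mem_univ _⟩
    have hmaxR : ∀ i, nn j S i ≤ nn j S istar := fun i =>
      Nat.cast_le.2 (hmax i (Finset.mem_univ i))
    have hfib : (S.filter fun z => j z = istar).Nonempty := by
      rw [← Finset.card_pos]
      calc 0 < (S.filter fun z => j z = j x0).card :=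
            Finset.card_pos.2 ⟨x0, Finset.mem_filter.2 ⟨hx0, rfl⟩⟩
        _ ≤ _ := hmax _ (Finset.mem_univ _)
    obtain ⟨x, hxf⟩ := hfib
    have hxS : x ∈ S := (Finset.mem_filter.1 hxf).1
    have hjx : j x = istar := (Finset.mem_filter.1 hxf).2
    have histar0 : (0 : ℝ) < nn j S istar := lt_of_lt_of_le one_pos (hjx ▸ nn_one_le j hxS)
    rw [sum_good_split f hxS]
    set T := S.erase x with hT
    have hTcard : T.card = 2 * n + 1 := by
      rw [hT, Finset.card_erase_of_mem hxS, hS]; omega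
    have hlift : ∀ y : D, f s(x, y) = c istar (j y) := by
      intro y; rw [hf, Sym2.lift_mk, ← hjx]
    calc ∑ y ∈ T, f s(x, y) * ∑ M ∈ univ.filter (Good (T.erase y)), ∏ e ∈ M, f e
        ≤ ∑ y ∈ T, c istar (j y) *
            ((prodn j T * nn j T (j y) ^ (-(1 / 2) : ℝ)) * Γ ^ n) := by
          refine Finset.sum_le_sum fun y hy => ?_
          rw [hlift y]
          refine mul_le_mul_of_nonneg_left ?_ (hc0 _ _)
          have hcard : (T.erase y).card = 2 * n := by
            rw [Finset.card_erase_of_mem hy, hTcard]; omega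
          refine le_trans (ih (T.erase y) hcard) ?_
          exact mul_le_mul_of_nonneg_right (prodn_erase j hy) (pow_nonneg hΓ0 n)
      _ = (prodn j T * Γ ^ n) * ∑ y ∈ T, c istar (j y) * nn j T (j y) ^ (-(1 / 2) : ℝ) := by
          rw [Finset.mul_sum]; refine Finset.sum_congr rfl fun y hy => ?_; ring
      _ ≤ (prodn j T * Γ ^ n) * (nn j S istar ^ ((1 : ℝ) / 2) * Γ) := by
          refine mul_le_mul_of_nonneg_left ?_
            (mul_nonneg (prodn_nonneg j T) (pow_nonneg hΓ0 n))
          have hfib' : ∑ y ∈ T, c istar (j y) * nn j T (j y) ^ (-(1 / 2) : ℝ)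
              = ∑ i, ∑ y ∈ T.filter fun y => j y = i,
                  c istar i * nn j T i ^ (-(1 / 2) : ℝ) :=
            (Finset.sum_fiberwise' T j fun i => c istar i * nn j T i ^ (-(1 / 2) : ℝ)).symm
          rw [hfib']
          have hterm : ∀ i : Fin m,
              ∑ y ∈ T.filter fun y => j y = i, c istar i * nn j T i ^ (-(1 / 2) : ℝ)
              = nn j T i * (c istar i * nn j T i ^ (-(1 / 2) : ℝ)) := by
            intro i
            rw [Finset.sum_const, nsmul_eq_mul]; rfl
          rw [Finset.sum_congr rfl fun i _ => hterm i]
          have hper : ∀ i : Fin m,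
              nn j T i * (c istar i * nn j T i ^ (-(1 / 2) : ℝ))
              ≤ c istar i * nn j S istar ^ ((1 : ℝ) / 2) := by
            intro i
            rcases eq_or_lt_of_le (nn_nonneg j T i) with h0 | h0
            · rw [← h0, zero_mul]
              exact mul_nonneg (hc0 _ _) (Real.rpow_nonneg (le_of_lt histar0) _)
            · have : nn j T i * nn j T i ^ (-(1 / 2) : ℝ) = nn j T i ^ ((1 : ℝ) / 2) := by
                nth_rewrite 1 [← Real.rpow_one (nn j T i)]
                rw [← Real.rpow_add h0]; norm_num
              rw [mul_comm (c istar i), ← mul_assoc, this]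
              refine mul_le_mul_of_nonneg_right ?_ (hc0 _ _) |>.trans_eq (mul_comm _ _)
              exact Real.rpow_le_rpow (le_of_lt h0)
                (le_trans (nn_erase_le j S x i) (hmaxR i)) (by norm_num)
          refine le_trans (Finset.sum_le_sum fun i _ => hper i) ?_
          rw [← Finset.sum_mul, mul_comm]
          exact mul_le_mul_of_nonneg_left (hΓ istar) (Real.rpow_nonneg (le_of_lt histar0) _)
      _ ≤ ((prodn j S * nn j S istar ^ (-(1 / 2) : ℝ)) * Γ ^ n) *
            (nn j S istar ^ ((1 : ℝ) / 2) * Γ) := by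
          refine mul_le_mul_of_nonneg_right
            (mul_le_mul_of_nonneg_right ?_ (pow_nonneg hΓ0 n))
            (mul_nonneg (Real.rpow_nonneg (le_of_lt histar0) _) hΓ0)
          simpa [hjx] using prodn_erase j hxS
      _ = (prodn j S * Γ ^ (n + 1)) *
            (nn j S istar ^ (-(1 / 2) : ℝ) * nn j S istar ^ ((1 : ℝ) / 2)) := by ring
      _ = prodn j S * Γ ^ (n + 1) := by
          rw [← Real.rpow_add histar0]; norm_num
end WickGraphAux

open Classical in
/-- **graph estimate for the Wick sum.** Let `D` be a finite set partitioned
into classes `D_j = j⁻¹(i)` of sizes `k i`, with `∑ i, k i = 2N`.  Let `c` be a symmetric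
nonnegative weight on pairs of classes with row sums bounded by `Γ` (the maximal row sum).
Then the sum over all perfect matchings `M` of `D` of the product over pairs `{x,y} ∈ M` of
`c (j x) (j y)` is at most `(∏ i, k i ^ (k i / 2)) · Γ^N`. -/
theorem sum_perfectMatchings_weight_le {D : Type*} [Fintype D] (m N : ℕ)
    (j : D → Fin m) (k : Fin m → ℕ)
    (hk : ∀ i, k i = (Finset.univ.filter fun x => j x = i).card)
    (hsum : ∑ i, k i = 2 * N)
    (c : Fin m → Fin m → ℝ) (hc0 : ∀ a b, 0 ≤ c a b) (hcs : ∀ a b, c a b = c b a)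
    (Γ : ℝ) (hΓ : ∀ a, ∑ b, c a b ≤ Γ) :
    ∑ M ∈ Finset.univ.filter (fun M : Finset (Sym2 D) =>
        (∀ e ∈ M, ¬ e.IsDiag) ∧ (∀ x : D, ∃! e, e ∈ M ∧ x ∈ e)),
      ∏ e ∈ M, Sym2.lift ⟨fun x y => c (j x) (j y), fun x y => hcs (j x) (j y)⟩ e ≤
      (∏ i, (k i : ℝ) ^ ((k i : ℝ) / 2)) * Γ ^ N := by
  classical
  have hset : (Finset.univ.filter (fun M : Finset (Sym2 D) =>
        (∀ e ∈ M, ¬ e.IsDiag) ∧ (∀ x : D, ∃! e, e ∈ M ∧ x ∈ e)))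
      = Finset.univ.filter (WickGraphAux.Good (Finset.univ : Finset D)) := by
    apply Finset.filter_congr
    intro M _
    unfold WickGraphAux.Good
    constructor
    · rintro ⟨h1, h2⟩
      exact ⟨h1, fun e _ x _ => Finset.mem_univ x, fun x _ => h2 x⟩
    · rintro ⟨h1, h2, h3⟩
      exact ⟨h1, fun x => h3 x (Finset.mem_univ x)⟩
  have hcard : (Finset.univ : Finset D).card = 2 * N := by
    rw [Finset.card_eq_sum_card_fiberwise (f := j) (t := Finset.univ)
      (fun x _ => Finset.mem_univ _)]
    rw [← hsum]
    exact Finset.sum_congr rfl fun i _ => (hk i).symm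
  have hprod : WickGraphAux.prodn j (Finset.univ : Finset D)
      = ∏ i, (k i : ℝ) ^ ((k i : ℝ) / 2) := by
    unfold WickGraphAux.prodn WickGraphAux.nn
    exact Finset.prod_congr rfl fun i _ => by rw [← hk i]
  rw [hset]
  calc _ ≤ WickGraphAux.prodn j (Finset.univ : Finset D) * Γ ^ N :=
        WickGraphAux.main_bound j c hc0 hcs Γ hΓ N Finset.univ hcard
    _ = _ := by rw [hprod]
end
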